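/- Let α be a real number with 0 ≤ α < 2/3, let s ≥ 1 be an integer and set n = ⌊5s/3⌋ + 2. If n ≥ 25, then λ_α(K_s ∨ (⌊2s/3⌋+2)K_1) < n − 2. -/

import Mathlib

open SimpleGraph

/-- The `Aα`-matrix of a finite simple graph: `Aα(G) = α·D(G) + (1-α)·A(G)`. -/
noncomputable def aAlphaMatrix {V : Type*} [Finite V] (α : ℝ) (G : SimpleGraph V) :
    Matrix V V ℝ :=
  letI := Fintype.ofFinite V
  letI := Classical.decEq V
  letI : DecidableRel G.Adj := Classical.decRel _
  α • Matrix.diagonal (fun v => (G.degree v : ℝ)) + (1 - α) • (G.adjMatrix ℝ)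

/-- The `Aα`-spectral radius: the largest eigenvalue of `Aα(G)` (the supremum of its real
spectrum; all eigenvalues of this symmetric matrix are real). -/
noncomputable def lambdaAlpha {V : Type*} [Finite V] (α : ℝ) (G : SimpleGraph V) : ℝ :=
  letI := Fintype.ofFinite V
  letI := Classical.decEq V
  sSup (spectrum ℝ (aAlphaMatrix α G))

/-- The join `G ∨ H` of two graphs on disjoint vertex sets. -/
def graphJoin {V W : Type*} (G : SimpleGraph V) (H : SimpleGraph W) : SimpleGraph (V ⊕ W) where
  Adj x y :=
    match x, y with
    | Sum.inl a, Sum.inl b => G.Adj a b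
    | Sum.inr a, Sum.inr b => H.Adj a b
    | Sum.inl _, Sum.inr _ => True
    | Sum.inr _, Sum.inl _ => True
  symm := by
    constructor
    rintro (a | a) (b | b) h
    · exact G.adj_symm h
    · trivial
    · trivial
    · exact H.adj_symm h
  loopless := by
    constructor
    rintro (a | a) h
    · exact G.irrefl h
    · exact H.irrefl h

/-- `G` has an `H`-factor where `H` consists of the paths `P_k` for `k ∈ ks`: a spanning
subgraph all of whose connected components are paths `P_k` with `k ∈ ks`. -/
def HasPathFactor {V : Type*} (G : SimpleGraph V) (ks : Set ℕ) : Prop :=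
  ∃ F : SimpleGraph V, F ≤ G ∧
    ∀ c : F.ConnectedComponent, ∃ k ∈ ks, Nonempty ((F.induce c.supp) ≃g pathGraph k)

/-- `K_1 ∨ (K_{n-2} ∪ K_1)`. -/
def specialGraph (n : ℕ) : SimpleGraph (Fin 1 ⊕ (Fin (n - 2) ⊕ Fin 1)) :=
  graphJoin (⊤ : SimpleGraph (Fin 1))
    ((⊤ : SimpleGraph (Fin (n - 2))) ⊕g (⊤ : SimpleGraph (Fin 1)))

/-!
Give the clique vertices weight `t` and the independent vertices weight `t - 3`, where
`t = ⌊2s/3⌋ + 2`. For this positive vector `w` one checks `A_α w < (s + t - 2) w` entrywise: on a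
clique vertex this reduces to `3α < 2`, on an independent vertex to `3(1 - α)s < (t - 2)(t - 3)`,
which holds once `s ≥ 14`. Since `A_α` is entrywise nonnegative, an eigenvector `v` and an index `k`
maximising `|v k| / w k` show that every real eigenvalue is smaller than `s + t - 2 = n - 2`.
-/

open Finset Matrix

theorem Matrix.abs_lt_of_mem_spectrum_of_mulVec_lt {n : Type*} [Fintype n] [DecidableEq n]
    {A : Matrix n n ℝ} (hA : ∀ i j, 0 ≤ A i j) {w : n → ℝ} (hw : ∀ i, 0 < w i) {r : ℝ}
    (hr : ∀ i, (A *ᵥ w) i < r * w i) {μ : ℝ} (hμ : μ ∈ spectrum ℝ A) : |μ| < r := by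
  rw [← Matrix.spectrum_toLin', ← Module.End.hasEigenvalue_iff_mem_spectrum] at hμ
  obtain ⟨v, hv⟩ := hμ.exists_hasEigenvector
  have hAv : A *ᵥ v = μ • v := by simpa using hv.apply_eq_smul
  obtain ⟨i₀, hi₀⟩ := Function.ne_iff.mp hv.2
  obtain ⟨k, -, hk⟩ := exists_max_image univ (fun i => |v i| / w i) ⟨i₀, mem_univ _⟩
  set m := |v k| / w k
  have hm : 0 < m :=
    (div_pos (abs_pos.mpr hi₀) (hw i₀)).trans_le (hk i₀ (mem_univ _))
  have hvk : |v k| = m * w k := (div_mul_cancel₀ _ (hw k).ne').symm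
  have hv_le (j : n) : |v j| ≤ m * w j := (div_le_iff₀ (hw j)).mp (hk j (mem_univ _))
  have key : |μ| * |v k| < r * |v k| :=
    calc |μ| * |v k| = |∑ j, A k j * v j| := by
          rw [← abs_mul, ← smul_eq_mul, ← Pi.smul_apply, ← hAv, mulVec, dotProduct]
      _ ≤ ∑ j, A k j * (m * w j) :=
          (abs_sum_le_sum_abs _ _).trans <| sum_le_sum fun j _ => by
            rw [abs_mul, abs_of_nonneg (hA k j)]
            exact mul_le_mul_of_nonneg_left (hv_le j) (hA k j)
      _ = m * (A *ᵥ w) k := by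
          simp only [mulVec, dotProduct, mul_sum]
          exact sum_congr rfl fun j _ => by ring
      _ < m * (r * w k) := mul_lt_mul_of_pos_left (hr k) hm
      _ = r * |v k| := by rw [hvk]; ring
  exact lt_of_mul_lt_mul_right key (abs_nonneg _)

section AAlpha

variable {V : Type*} [Fintype V] [DecidableEq V]

theorem aAlphaMatrix_eq (α : ℝ) (G : SimpleGraph V) [DecidableRel G.Adj] :
    aAlphaMatrix α G =
      α • Matrix.diagonal (fun v => (G.degree v : ℝ)) + (1 - α) • G.adjMatrix ℝ := by
  unfold aAlphaMatrix
  congr!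

theorem lambdaAlpha_eq_sSup (α : ℝ) (G : SimpleGraph V) :
    lambdaAlpha α G = sSup (spectrum ℝ (aAlphaMatrix α G)) := by
  unfold lambdaAlpha
  congr!

theorem aAlphaMatrix_nonneg {α : ℝ} (hα0 : 0 ≤ α) (hα1 : α ≤ 1) (G : SimpleGraph V) (u v : V) :
    0 ≤ aAlphaMatrix α G u v := by
  classical
  rw [aAlphaMatrix_eq, Matrix.add_apply, Matrix.smul_apply, Matrix.smul_apply, diagonal_apply,
    adjMatrix_apply, smul_eq_mul, smul_eq_mul]
  exact add_nonneg (mul_nonneg hα0 (by split_ifs <;> positivity))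
    (mul_nonneg (by linarith) (by split_ifs <;> norm_num))

theorem aAlphaMatrix_mulVec_apply (α : ℝ) (G : SimpleGraph V) [DecidableRel G.Adj]
    (w : V → ℝ) (v : V) :
    (aAlphaMatrix α G *ᵥ w) v =
      α * G.degree v * w v + (1 - α) * ∑ u ∈ G.neighborFinset v, w u := by
  rw [aAlphaMatrix_eq, add_mulVec, smul_mulVec, smul_mulVec, Pi.add_apply, Pi.smul_apply,
    Pi.smul_apply, mulVec_diagonal, adjMatrix_mulVec_apply, smul_eq_mul, smul_eq_mul, mul_assoc]

theorem lambdaAlpha_lt_of_mulVec_lt {α : ℝ} (hα0 : 0 ≤ α) (hα1 : α ≤ 1) (G : SimpleGraph V)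
    {w : V → ℝ} (hw : ∀ v, 0 < w v) {r : ℝ} (hr0 : 0 < r)
    (hr : ∀ v, (aAlphaMatrix α G *ᵥ w) v < r * w v) : lambdaAlpha α G < r := by
  rw [lambdaAlpha_eq_sSup]
  rcases (spectrum ℝ (aAlphaMatrix α G)).eq_empty_or_nonempty with hempty | hne
  · rwa [hempty, Real.sSup_empty]
  · refine ((Matrix.finite_spectrum _).csSup_lt_iff hne).mpr fun μ hμ => ?_
    exact (le_abs_self μ).trans_lt <|
      abs_lt_of_mem_spectrum_of_mulVec_lt (aAlphaMatrix_nonneg hα0 hα1 G) hw hr hμ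

end AAlpha

section Join

variable {V W : Type*} [Fintype V] [Fintype W] (G : SimpleGraph V) (H : SimpleGraph W)
  [DecidableRel (graphJoin G H).Adj]

theorem graphJoin_neighborFinset_inl [DecidableRel G.Adj] (a : V) :
    (graphJoin G H).neighborFinset (Sum.inl a) = (G.neighborFinset a).disjSum univ := by
  ext (b | b) <;> rw [mem_neighborFinset] <;> simp [graphJoin]

theorem graphJoin_neighborFinset_inr [DecidableRel H.Adj] (b : W) :
    (graphJoin G H).neighborFinset (Sum.inr b) = univ.disjSum (H.neighborFinset b) := by
  ext (a | a) <;> rw [mem_neighborFinset] <;> simp [graphJoin]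

end Join

section CompleteSplit

variable {s t : ℕ} (α x y : ℝ)

theorem aAlphaMatrix_completeSplit_mulVec_inl (a : Fin s) :
    (aAlphaMatrix α (graphJoin (⊤ : SimpleGraph (Fin s)) (⊥ : SimpleGraph (Fin t))) *ᵥ
        Sum.elim (fun _ => x) (fun _ => y)) (Sum.inl a) =
      α * ((s - 1 : ℝ) + t) * x + (1 - α) * ((s - 1 : ℝ) * x + t * y) := by
  classical
  rw [aAlphaMatrix_mulVec_apply, ← card_neighborFinset_eq_degree,
    graphJoin_neighborFinset_inl]
  simp [sum_disjSum, card_compl, Nat.cast_sub (Nat.one_le_of_lt a.pos)]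

theorem aAlphaMatrix_completeSplit_mulVec_inr (b : Fin t) :
    (aAlphaMatrix α (graphJoin (⊤ : SimpleGraph (Fin s)) (⊥ : SimpleGraph (Fin t))) *ᵥ
        Sum.elim (fun _ => x) (fun _ => y)) (Sum.inr b) =
      α * s * y + (1 - α) * (s * x) := by
  classical
  rw [aAlphaMatrix_mulVec_apply, ← card_neighborFinset_eq_degree,
    graphJoin_neighborFinset_inr]
  simp

end CompleteSplit

theorem three_mul_add_lt_sq {s : ℕ} (hn : 25 ≤ 5 * s / 3 + 2) :
    3 * s + 2 * s / 3 < (2 * s / 3) ^ 2 := by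
  have h2s : 2 * s ≤ 3 * (2 * s / 3) + 2 := by omega
  have hq : 9 ≤ 2 * s / 3 := by omega
  nlinarith

theorem lambdaAlpha_split_lt_case2_general (α : ℝ) (hα0 : 0 ≤ α) (hα1 : α < 2 / 3)
    (s : ℕ) (hn : 25 ≤ 5 * s / 3 + 2) :
    lambdaAlpha α (graphJoin (⊤ : SimpleGraph (Fin s))
        (⊥ : SimpleGraph (Fin (2 * s / 3 + 2)))) <
      ((5 * s / 3 + 2 : ℕ) : ℝ) - 2 := by
  have hsq : (3 * s + (2 * s / 3 : ℕ) : ℝ) < (2 * s / 3 : ℕ) ^ 2 := by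
    exact_mod_cast three_mul_add_lt_sq hn
  have hq : (9 : ℝ) ≤ (2 * s / 3 : ℕ) := by exact_mod_cast (show 9 ≤ 2 * s / 3 by omega)
  set t := 2 * s / 3 + 2 with ht
  have hn_eq : ((5 * s / 3 + 2 : ℕ) : ℝ) - 2 = s + t - 2 := by
    rw [show 5 * s / 3 + 2 = s + t by omega]; push_cast; ring
  have htq : (t : ℝ) = (2 * s / 3 : ℕ) + 2 := by rw [ht]; push_cast; ring
  rw [hn_eq]
  refine lambdaAlpha_lt_of_mulVec_lt hα0 (by linarith) _
    (w := Sum.elim (fun _ => (t : ℝ)) (fun _ => (t : ℝ) - 3))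
    (by rintro (a | b) <;> simp only [Sum.elim_inl, Sum.elim_inr] <;> linarith)
    (by linarith) ?_
  rintro (a | b)
  · rw [aAlphaMatrix_completeSplit_mulVec_inl, Sum.elim_inl]
    nlinarith [mul_pos (show (0 : ℝ) < t by linarith) (show 0 < 2 - 3 * α by linarith)]
  · rw [aAlphaMatrix_completeSplit_mulVec_inr, Sum.elim_inr]
    nlinarith [mul_nonneg hα0 (Nat.cast_nonneg (α := ℝ) s)]

/-- For `0 ≤ α < 2/3` and an integer `s ≥ 1`, setting `n = ⌊5s/3⌋ + 2`, if `n ≥ 25` then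
`λ_α(K_s ∨ (⌊2s/3⌋+2)K_1) < n − 2`. -/
theorem lambdaAlpha_split_lt_case2 (α : ℝ) (hα0 : 0 ≤ α) (hα1 : α < 2 / 3)
    (s : ℕ) (hs : 1 ≤ s) (hn : 25 ≤ 5 * s / 3 + 2) :
    lambdaAlpha α (graphJoin (⊤ : SimpleGraph (Fin s))
        (⊥ : SimpleGraph (Fin (2 * s / 3 + 2)))) <
      ((5 * s / 3 + 2 : ℕ) : ℝ) - 2 :=
  lambdaAlpha_split_lt_case2_general α hα0 hα1 s hn
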